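/- arXiv:2512.03984 — 4 statements merged into one kernel-verified Lean document; each statement's English description precedes it below -/
import Mathlib

section
/- Let A be a Hermitian operator on a finite-dimensional complex Hilbert space, with decomposition A = A₊ - A₋ into positive semidefinite operators supported on the positive and negative eigenspaces of A respectively. Then tr[A₊] equals the infimum of tr[T] over all operators T satisfying T ≥ 0 and T ≥ A (in the Loewner order), and this infimum is attained at T = A₊. -/
open Matrix Complex
open scoped Matrix Kronecker Real ComplexOrder

noncomputable section

/-- The Pauli matrix `σ_x`. -/
def σx : Matrix (Fin 2) (Fin 2) ℂ := !![0, 1; 1, 0]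
/-- The Pauli matrix `σ_y`. -/
def σy : Matrix (Fin 2) (Fin 2) ℂ := !![0, -Complex.I; Complex.I, 0]
/-- The Pauli matrix `σ_z`. -/
def σz : Matrix (Fin 2) (Fin 2) ℂ := !![1, 0; 0, -1]

/-- `U φ = exp(-i φ σ_z)`, the unitary rotation about the z-axis. -/
def U (φ : ℝ) : Matrix (Fin 2) (Fin 2) ℂ :=
  NormedSpace.exp ((-(Complex.I * (φ : ℂ))) • σz)

/-- The rotationally covariant POVM density `M_φ^r = (1/π) U_φ* (𝟙 + r σ_x) U_φ`. -/
def Mpovm (r φ : ℝ) : Matrix (Fin 2) (Fin 2) ℂ :=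
  ((π : ℂ))⁻¹ • ((U φ)ᴴ * ((1 : Matrix (Fin 2) (Fin 2) ℂ) + (r : ℂ) • σx) * U φ)

/-- A density matrix: positive semidefinite with unit trace. -/
def IsDensity {n : Type*} [Fintype n] [DecidableEq n] (ρ : Matrix n n ℂ) : Prop :=
  ρ.PosSemidef ∧ ρ.trace = 1

/-- The singlet vector `|Ψ⁻⟩ = (|01⟩ - |10⟩)/√2`. -/
def ψminus : Fin 2 × Fin 2 → ℂ := fun p =>
  if p = (0, 1) then (Real.sqrt 2)⁻¹ else if p = (1, 0) then -(Real.sqrt 2)⁻¹ else 0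

/-- The projector `|Ψ⁻⟩⟨Ψ⁻|`. -/
def singletProj : Matrix (Fin 2 × Fin 2) (Fin 2 × Fin 2) ℂ :=
  Matrix.vecMulVec ψminus (fun j => (starRingEnd ℂ) (ψminus j))

/-- The Werner state `W_f = f |Ψ⁻⟩⟨Ψ⁻| + ((1-f)/4) 𝟙₄`. -/
def Werner (f : ℝ) : Matrix (Fin 2 × Fin 2) (Fin 2 × Fin 2) ℂ :=
  (f : ℂ) • singletProj + (((1 - f) / 4 : ℝ) : ℂ) • (1 : Matrix (Fin 2 × Fin 2) (Fin 2 × Fin 2) ℂ)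

/-!
Evaluate `tr T` in an orthonormal eigenbasis `(vᵢ)` of `A₊`, with eigenvalues `dᵢ ≥ 0`.
If `dᵢ = 0`, then `⟨vᵢ, T vᵢ⟩ ≥ 0 = dᵢ` because `T ≥ 0`. If `dᵢ ≠ 0`, then
`A₋ vᵢ = dᵢ⁻¹ A₋ A₊ vᵢ = 0`, so `⟨vᵢ, T vᵢ⟩ ≥ ⟨vᵢ, A vᵢ⟩ = dᵢ` because `T ≥ A`.
Summing, `tr T ≥ ∑ dᵢ = tr A₊`; and `T = A₊` is admissible since `A₊ - A = A₋ ≥ 0`.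
-/

namespace Matrix

variable {𝕜 n : Type*} [RCLike 𝕜] [Fintype n] {P N T : Matrix n n 𝕜}

theorem le_re_star_dotProduct_mulVec_of_mulVec_eq_smul (hT : T.PosSemidef)
    (hTA : (T - (P - N)).PosSemidef) (hNP : N * P = 0) {v : n → 𝕜} {d : ℝ}
    (hv : P *ᵥ v = d • v) (hv1 : star v ⬝ᵥ v = 1) :
    d ≤ RCLike.re (star v ⬝ᵥ T *ᵥ v) := by
  by_cases hd : d = 0
  · exact hd ▸ (RCLike.nonneg_iff.mp (hT.dotProduct_mulVec_nonneg v)).1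
  have hNv : N *ᵥ v = 0 := by
    have : d • (N *ᵥ v) = 0 := by rw [← mulVec_smul, ← hv, mulVec_mulVec, hNP, zero_mulVec]
    exact (smul_eq_zero.mp this).resolve_left hd
  have hgap := (RCLike.nonneg_iff.mp (hTA.dotProduct_mulVec_nonneg v)).1
  simpa [sub_mulVec, hv, hNv, hv1, RCLike.smul_re] using hgap

variable [DecidableEq n]

theorem trace_toEuclideanLin (T : Matrix n n 𝕜) :
    (toEuclideanLin T).trace 𝕜 _ = T.trace := by
  simp [toLpLin_eq_toLin, LinearMap.trace_eq_matrix_trace _ (PiLp.basisFun 2 𝕜 n)]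

theorem trace_eq_sum_star_dotProduct_mulVec {ι : Type*} [Fintype ι] (T : Matrix n n 𝕜)
    (b : OrthonormalBasis ι 𝕜 (EuclideanSpace 𝕜 n)) :
    T.trace = ∑ i, star ⇑(b i) ⬝ᵥ T *ᵥ ⇑(b i) := by
  rw [← trace_toEuclideanLin, LinearMap.trace_eq_sum_inner _ b]
  simp [EuclideanSpace.inner_eq_star_dotProduct, dotProduct_comm]

theorem re_trace_le_of_posSemidef_sub (hP : P.IsHermitian) (hT : T.PosSemidef)
    (hTA : (T - (P - N)).PosSemidef) (hNP : N * P = 0) :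
    RCLike.re P.trace ≤ RCLike.re T.trace := by
  rw [hP.trace_eq_sum_eigenvalues, trace_eq_sum_star_dotProduct_mulVec T hP.eigenvectorBasis,
    map_sum, map_sum]
  refine Finset.sum_le_sum fun i _ => ?_
  rw [RCLike.ofReal_re]
  refine le_re_star_dotProduct_mulVec_of_mulVec_eq_smul hT hTA hNP
    (hP.mulVec_eigenvectorBasis i) ?_
  rw [dotProduct_comm, ← EuclideanSpace.inner_eq_star_dotProduct, OrthonormalBasis.inner_eq_one]

end Matrix

theorem trace_posPart_isLeast_general {n : ℕ} (A Apos Aneg : Matrix (Fin n) (Fin n) ℂ)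
    (hpos : Apos.PosSemidef) (hneg : Aneg.PosSemidef)
    (hdec : A = Apos - Aneg) (hsupp : Apos * Aneg = 0) :
    IsLeast {t : ℝ | ∃ T : Matrix (Fin n) (Fin n) ℂ,
        T.PosSemidef ∧ (T - A).PosSemidef ∧ T.trace.re = t} Apos.trace.re := by
  subst hdec
  refine ⟨⟨Apos, hpos, by simpa using hneg, rfl⟩, ?_⟩
  rintro _ ⟨T, hT, hTA, rfl⟩
  have hnegpos : Aneg * Apos = 0 := by
    simpa [hpos.isHermitian.eq, hneg.isHermitian.eq] using congr_arg conjTranspose hsupp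
  exact re_trace_le_of_posSemidef_sub hpos.isHermitian hT hTA hnegpos

/-- for Hermitian `A = A₊ - A₋` with `A₊, A₋ ⪰ 0` supported on orthogonal
eigenspaces (`A₊ A₋ = 0`), `tr A₊` is the least value of `tr T` over `{T | T ⪰ 0, T ⪰ A}`,
attained at `T = A₊`. -/
theorem trace_posPart_isLeast {n : ℕ} (A Apos Aneg : Matrix (Fin n) (Fin n) ℂ)
    (hA : A.IsHermitian) (hpos : Apos.PosSemidef) (hneg : Aneg.PosSemidef)
    (hdec : A = Apos - Aneg) (hsupp : Apos * Aneg = 0) :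
    IsLeast {t : ℝ | ∃ T : Matrix (Fin n) (Fin n) ℂ,
        T.PosSemidef ∧ (T - A).PosSemidef ∧ T.trace.re = t} Apos.trace.re :=
  trace_posPart_isLeast_general A Apos Aneg hpos hneg hdec hsupp
end
end

section
/- Let M₀ be a positive semidefinite 2×2 Hermitian matrix and let U_φ = exp(-i φ σ_z). Suppose that for every 2×2 density matrix ρ (positive semidefinite with trace 1), the integral (1/π)∫₀^π tr[ρ U_φ* M₀ U_φ] dφ equals 1. Then M₀ = 𝟙 + k_x σ_x + k_y σ_y for some real k_x, k_y with k_x² + k_y² ≤ 1. -/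
open Matrix Complex
open scoped Matrix Kronecker Real ComplexOrder

noncomputable section

/-! `U φ` is diagonal with unimodular entries, so conjugating by it leaves the diagonal of `M₀`
unchanged; for `ρ = |i⟩⟨i|` the integrand is the constant `M₀ i i`, and normalization forces both
diagonal entries to be `1`. A Hermitian matrix with unit diagonal is `𝟙 + Re m σ_x - Im m σ_y` with
`m = M₀ 0 1`, and positivity gives `0 ≤ det M₀ = 1 - |m|²`. -/

lemma U_eq_diagonal (φ : ℝ) :
    U φ = diagonal ![Complex.exp (-(Complex.I * φ)), Complex.exp (Complex.I * φ)] := by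
  have h : (-(Complex.I * (φ : ℂ))) • σz = diagonal ![-(Complex.I * φ), Complex.I * φ] := by
    ext i j; fin_cases i <;> fin_cases j <;> simp [σz]
  rw [U, h, Matrix.exp_diagonal]
  congr 1
  ext i; fin_cases i <;> simp [Complex.exp_eq_exp_ℂ]

lemma conjTranspose_diagonal_mul_mul_diagonal_apply_self {n R : Type*} [Fintype n]
    [DecidableEq n] [CommSemiring R] [StarRing R] (d : n → R) (M : Matrix n n R) (i : n) :
    ((diagonal d)ᴴ * M * diagonal d) i i = star (d i) * d i * M i i := by
  rw [diagonal_conjTranspose, mul_diagonal, diagonal_mul, Pi.star_apply]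
  ring

lemma star_exp_mul_I_mul_exp_mul_I (θ : ℝ) :
    star (Complex.exp (θ * Complex.I)) * Complex.exp (θ * Complex.I) = 1 := by
  rw [Complex.star_def, ← Complex.normSq_eq_conj_mul_self, Complex.normSq_eq_norm_sq,
    Complex.norm_exp_ofReal_mul_I]
  norm_num

lemma U_conj_apply_self (φ : ℝ) (M : Matrix (Fin 2) (Fin 2) ℂ) (i : Fin 2) :
    ((U φ)ᴴ * M * U φ) i i = M i i := by
  rw [U_eq_diagonal, conjTranspose_diagonal_mul_mul_diagonal_apply_self]
  convert one_mul (M i i) using 2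
  fin_cases i
  · simpa [mul_comm Complex.I] using star_exp_mul_I_mul_exp_mul_I (-φ)
  · simpa [mul_comm Complex.I] using star_exp_mul_I_mul_exp_mul_I φ

lemma isDensity_single {n : Type*} [Fintype n] [DecidableEq n] (i : n) :
    IsDensity (single i i (1 : ℂ)) := by
  refine ⟨?_, trace_single_eq_same i 1⟩
  rw [← diagonal_single]
  exact PosSemidef.diagonal (Pi.single_nonneg.mpr zero_le_one)

lemma diag_eq_one_of_rotation_average_eq_one (M : Matrix (Fin 2) (Fin 2) ℂ)
    (hnorm : ∀ ρ : Matrix (Fin 2) (Fin 2) ℂ, IsDensity ρ →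
      ((π : ℂ))⁻¹ * ∫ φ in (0:ℝ)..π, (ρ * ((U φ)ᴴ * M * U φ)).trace = 1)
    (i : Fin 2) : M i i = 1 := by
  have h := hnorm _ (isDensity_single i)
  simp_rw [trace_single_mul, U_conj_apply_self, one_smul, intervalIntegral.integral_const,
    sub_zero, Complex.real_smul] at h
  rwa [← mul_assoc, inv_mul_cancel₀ (Complex.ofReal_ne_zero.mpr Real.pi_ne_zero), one_mul] at h

lemma Matrix.PosSemidef.normSq_apply_zero_one_le_one {M : Matrix (Fin 2) (Fin 2) ℂ}
    (hM : M.PosSemidef) (h00 : M 0 0 = 1) (h11 : M 1 1 = 1) : Complex.normSq (M 0 1) ≤ 1 := by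
  have hdet := hM.det_nonneg
  rw [det_fin_two, h00, h11, one_mul, ← hM.1.apply 1 0, Complex.star_def,
    Complex.mul_conj, ← Complex.ofReal_one, ← Complex.ofReal_sub,
    Complex.zero_le_real] at hdet
  linarith

lemma eq_one_add_smul_σx_add_smul_σy {M : Matrix (Fin 2) (Fin 2) ℂ} (hM : M.IsHermitian)
    (h00 : M 0 0 = 1) (h11 : M 1 1 = 1) :
    M = 1 + ((M 0 1).re : ℂ) • σx + ((-(M 0 1).im : ℝ) : ℂ) • σy := by
  have h10 : M 1 0 = star (M 0 1) := (hM.apply 1 0).symm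
  ext i j
  fin_cases i <;> fin_cases j <;> simp [σx, σy, h00, h11, h10, Complex.ext_iff]

/-- if a positive semidefinite `M₀` yields total probability 1,
`(1/π) ∫₀^π tr[ρ U_φ* M₀ U_φ] dφ = 1`, for every density matrix `ρ`, then
`M₀ = 𝟙 + k_x σ_x + k_y σ_y` with `k_x² + k_y² ≤ 1`. -/
theorem roc_normalization_characterizes_M0 (M₀ : Matrix (Fin 2) (Fin 2) ℂ)
    (hM₀ : M₀.PosSemidef)
    (hnorm : ∀ ρ : Matrix (Fin 2) (Fin 2) ℂ, IsDensity ρ →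
      ((π : ℂ))⁻¹ * ∫ φ in (0:ℝ)..π, (ρ * ((U φ)ᴴ * M₀ * U φ)).trace = 1) :
    ∃ kx ky : ℝ, kx ^ 2 + ky ^ 2 ≤ 1 ∧
      M₀ = (1 : Matrix (Fin 2) (Fin 2) ℂ) + (kx : ℂ) • σx + (ky : ℂ) • σy := by
  have h00 := diag_eq_one_of_rotation_average_eq_one M₀ hnorm 0
  have h11 := diag_eq_one_of_rotation_average_eq_one M₀ hnorm 1
  refine ⟨(M₀ 0 1).re, -(M₀ 0 1).im, ?_, eq_one_add_smul_σx_add_smul_σy hM₀.1 h00 h11⟩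
  have h := hM₀.normSq_apply_zero_one_le_one h00 h11
  rwa [Complex.normSq_apply, ← sq, ← sq, ← neg_sq (M₀ 0 1).im] at h
end
end

section
/- Since a Werner state W_f is separable iff f ≤ 1/3, the maximally entangled state (f = 1) measured with rotationally covariant devices of contrasts r_A, r_B yields statistics that are reproducible by a separable state measured with ideal devices whenever r_A·r_B ≤ 1/3; hence device-independent entanglement detection from these statistics requires r_A·r_B > 1/3. -/
open Matrix Complex
open scoped Matrix Kronecker Real ComplexOrder

noncomputable section

/-- A separable state on `ℂ² ⊗ ℂ²`: a convex combination of product density matrices. -/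
def IsSeparable2 (σ : Matrix (Fin 2 × Fin 2) (Fin 2 × Fin 2) ℂ) : Prop :=
  ∃ (m : ℕ) (p : Fin m → ℝ) (ρA ρB : Fin m → Matrix (Fin 2) (Fin 2) ℂ),
    (∀ i, 0 ≤ p i) ∧ (∑ i, p i) = 1 ∧ (∀ i, IsDensity (ρA i)) ∧ (∀ i, IsDensity (ρB i)) ∧
      σ = ∑ i, ((p i : ℝ) : ℂ) • (ρA i ⊗ₖ ρB i)

/-!
Writing the Werner state in the Pauli basis, `W_f = ¼ (𝟙 - f ∑ₖ σₖ ⊗ σₖ)`, the statistics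
`tr[W_f (A ⊗ B)]` only see `tr A`, `tr B` and the Pauli components `tr(σₖ A)`, `tr(σₖ B)`.
Since `M_φ^r = π⁻¹ (𝟙 + r U_φ* σ_x U_φ)` with `U_φ* σ_x U_φ` traceless, the contrasts only
scale the Pauli components, so `tr[W_f (M^a ⊗ M^b)] = tr[W_{fab} (M^1 ⊗ M^1)]`.
For `0 ≤ f ≤ 1/3` the Werner state is separable:
`W_f = (f/2) ∑ₖ (P⁺ₖ ⊗ P⁻ₖ + P⁻ₖ ⊗ P⁺ₖ) + (1 - 3f) (𝟙/2 ⊗ 𝟙/2)`,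
where `P^±ₖ = (𝟙 ± σₖ)/2` are the eigenprojectors of `σₖ`,
because `P⁺ ⊗ P⁻ + P⁻ ⊗ P⁺ = (𝟙 - σ ⊗ σ)/2`.
-/

def pauli : Fin 3 → Matrix (Fin 2) (Fin 2) ℂ := ![σx, σy, σz]

lemma pauli_isHermitian (k : Fin 3) : (pauli k).IsHermitian := by
  fin_cases k <;> ext i j <;> fin_cases i <;> fin_cases j <;> simp [pauli, σx, σy, σz]

lemma pauli_mul_self (k : Fin 3) : pauli k * pauli k = 1 := by
  fin_cases k <;> ext i j <;> fin_cases i <;> fin_cases j <;> simp [pauli, σx, σy, σz]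

lemma trace_pauli (k : Fin 3) : (pauli k).trace = 0 := by
  fin_cases k <;> simp [pauli, σx, σy, σz, Matrix.trace_fin_two]

lemma U_mem_unitaryGroup (φ : ℝ) : U φ ∈ Matrix.unitaryGroup (Fin 2) ℂ := by
  have hskew : ((-(I * (φ : ℂ))) • σz)ᴴ = -((-(I * (φ : ℂ))) • σz) := by
    have hz : σzᴴ = σz := pauli_isHermitian 2
    rw [Matrix.conjTranspose_smul, hz]
    simp
  rw [Matrix.mem_unitaryGroup_iff', Matrix.star_eq_conjTranspose, U, ← Matrix.exp_conjTranspose,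
    hskew, Matrix.exp_neg]
  exact Matrix.nonsing_inv_mul _ ((Matrix.isUnit_iff_isUnit_det _).mp (Matrix.isUnit_exp _))

def rotatedσx (φ : ℝ) : Matrix (Fin 2) (Fin 2) ℂ := (U φ)ᴴ * σx * U φ

lemma Mpovm_eq_rotatedσx (r φ : ℝ) : Mpovm r φ = (π : ℂ)⁻¹ • (1 + (r : ℂ) • rotatedσx φ) := by
  have hU := Matrix.mem_unitaryGroup_iff'.mp (U_mem_unitaryGroup φ)
  rw [Mpovm, rotatedσx, mul_add, add_mul, Matrix.mul_one, ← Matrix.star_eq_conjTranspose, hU,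
    Matrix.mul_smul, Matrix.smul_mul]

lemma trace_rotatedσx (φ : ℝ) : (rotatedσx φ).trace = 0 := by
  have hU := Matrix.mem_unitaryGroup_iff.mp (U_mem_unitaryGroup φ)
  rw [rotatedσx, Matrix.trace_mul_cycle, ← Matrix.star_eq_conjTranspose, hU, Matrix.one_mul]
  simpa [pauli] using trace_pauli 0

lemma singletProj_eq_pauli :
    singletProj = (4⁻¹ : ℂ) • (1 - ∑ k, pauli k ⊗ₖ pauli k) := by
  have hsqrt : ((Real.sqrt 2 : ℝ) : ℂ)⁻¹ * ((Real.sqrt 2 : ℝ) : ℂ)⁻¹ = 2⁻¹ := by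
    rw [← mul_inv, ← Complex.ofReal_mul, Real.mul_self_sqrt zero_le_two]; norm_num
  ext ⟨i, j⟩ ⟨k, l⟩
  fin_cases i <;> fin_cases j <;> fin_cases k <;> fin_cases l <;>
    simp [singletProj, ψminus, Matrix.vecMulVec_apply, Fin.sum_univ_three, pauli, σx, σy, σz,
      hsqrt] <;> norm_num

lemma Werner_eq_pauli (f : ℝ) :
    Werner f = (4⁻¹ : ℂ) • (1 - (f : ℂ) • ∑ k, pauli k ⊗ₖ pauli k) := by
  rw [Werner, singletProj_eq_pauli]
  push_cast
  module

lemma trace_Werner_mul_kronecker (f : ℝ) (A B : Matrix (Fin 2) (Fin 2) ℂ) :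
    (Werner f * (A ⊗ₖ B)).trace
      = 4⁻¹ * (A.trace * B.trace - f * ∑ k, (pauli k * A).trace * (pauli k * B).trace) := by
  simp only [Werner_eq_pauli, Matrix.smul_mul, Matrix.sub_mul, Matrix.one_mul, Finset.sum_mul,
    ← Matrix.mul_kronecker_mul, Matrix.trace_smul, Matrix.trace_sub, Matrix.trace_sum,
    Matrix.trace_kronecker, smul_eq_mul]

lemma trace_Mpovm (r φ : ℝ) : (Mpovm r φ).trace = (π : ℂ)⁻¹ * 2 := by
  simp [Mpovm_eq_rotatedσx, trace_rotatedσx]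

lemma trace_pauli_mul_Mpovm (k : Fin 3) (r φ : ℝ) :
    (pauli k * Mpovm r φ).trace = r * ((π : ℂ)⁻¹ * (pauli k * rotatedσx φ).trace) := by
  simp only [Mpovm_eq_rotatedσx, Matrix.mul_smul, Matrix.mul_add, Matrix.mul_one, trace_smul,
    trace_add, trace_pauli, zero_add, smul_eq_mul]
  ring

lemma trace_Werner_mul_kronecker_Mpovm (f a b φ ψ : ℝ) :
    (Werner f * (Mpovm a φ ⊗ₖ Mpovm b ψ)).trace
      = (Werner (f * a * b) * (Mpovm 1 φ ⊗ₖ Mpovm 1 ψ)).trace := by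
  simp only [trace_Werner_mul_kronecker, trace_Mpovm, trace_pauli_mul_Mpovm, Fin.sum_univ_three]
  push_cast
  ring

lemma IsSeparable2.isDensity {σ : Matrix (Fin 2 × Fin 2) (Fin 2 × Fin 2) ℂ}
    (h : IsSeparable2 σ) : IsDensity σ := by
  obtain ⟨m, p, ρA, ρB, hp, hp1, hA, hB, rfl⟩ := h
  refine ⟨Matrix.posSemidef_sum _ fun i _ => ?_, ?_⟩
  · exact ((hA i).1.kronecker (hB i).1).smul (Complex.zero_le_real.mpr (hp i))
  · simp [Matrix.trace_sum, Matrix.trace_kronecker, (hA _).2, (hB _).2, ← Complex.ofReal_sum, hp1]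

lemma isSeparable2_sum {ι : Type*} [Fintype ι] (p : ι → ℝ) (ρA ρB : ι → Matrix (Fin 2) (Fin 2) ℂ)
    (hp : ∀ i, 0 ≤ p i) (hp1 : ∑ i, p i = 1) (hA : ∀ i, IsDensity (ρA i))
    (hB : ∀ i, IsDensity (ρB i)) : IsSeparable2 (∑ i, (p i : ℂ) • (ρA i ⊗ₖ ρB i)) := by
  let e := (Fintype.equivFin ι).symm
  refine ⟨Fintype.card ι, p ∘ e, ρA ∘ e, ρB ∘ e, fun _ => hp _, ?_, fun _ => hA _, fun _ => hB _,
    ?_⟩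
  · rwa [Function.comp_def, e.sum_comp]
  · exact (e.sum_comp fun i => (p i : ℂ) • (ρA i ⊗ₖ ρB i)).symm

/-- For an involution `S`, the projector onto its `+1`-eigenspace. -/
def involutionProj {n : Type*} [Fintype n] [DecidableEq n] (S : Matrix n n ℂ) : Matrix n n ℂ :=
  (2⁻¹ : ℂ) • (1 + S)

lemma isDensity_involutionProj {S : Matrix (Fin 2) (Fin 2) ℂ} (hS : S.IsHermitian)
    (hS2 : S * S = 1) (htr : S.trace = 0) : IsDensity (involutionProj S) := by
  have hherm : (involutionProj S)ᴴ = involutionProj S := by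
    simp [involutionProj, Matrix.conjTranspose_smul, hS.eq]
  have hidem : involutionProj S * involutionProj S = involutionProj S := by
    simp only [involutionProj, Matrix.smul_mul, Matrix.mul_smul, Matrix.add_mul, Matrix.mul_add,
      Matrix.one_mul, Matrix.mul_one, hS2]
    module
  refine ⟨?_, ?_⟩
  · have h := Matrix.posSemidef_conjTranspose_mul_self (involutionProj S)
    rwa [hherm, hidem] at h
  · simp [involutionProj, htr]

lemma isDensity_half_one : IsDensity ((2⁻¹ : ℂ) • (1 : Matrix (Fin 2) (Fin 2) ℂ)) :=
  ⟨Matrix.PosSemidef.one.smul (by positivity), by simp⟩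

lemma sum_involutionProj_kronecker {n : Type*} [Fintype n] [DecidableEq n] (S : Matrix n n ℂ) :
    ∑ b : Bool, involutionProj (cond b S (-S)) ⊗ₖ involutionProj (cond b (-S) S)
      = (2⁻¹ : ℂ) • (1 - S ⊗ₖ S) := by
  simp only [Fintype.sum_bool, cond_true, cond_false, involutionProj, ← neg_one_smul ℂ S,
    Matrix.smul_kronecker, Matrix.kronecker_smul, Matrix.add_kronecker, Matrix.kronecker_add,
    Matrix.one_kronecker_one]
  module

lemma isDensity_involutionProj_pauli (k : Fin 3) : IsDensity (involutionProj (pauli k)) :=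
  isDensity_involutionProj (pauli_isHermitian k) (pauli_mul_self k) (trace_pauli k)

lemma isDensity_involutionProj_neg_pauli (k : Fin 3) : IsDensity (involutionProj (-pauli k)) :=
  isDensity_involutionProj (pauli_isHermitian k).neg (by rw [neg_mul_neg, pauli_mul_self])
    (by rw [Matrix.trace_neg, trace_pauli, neg_zero])

def wernerWeight (f : ℝ) : Option (Fin 3 × Bool) → ℝ
  | none => 1 - 3 * f
  | some _ => f / 2

def wernerStateA : Option (Fin 3 × Bool) → Matrix (Fin 2) (Fin 2) ℂ
  | none => (2⁻¹ : ℂ) • 1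
  | some (k, b) => involutionProj (cond b (pauli k) (-pauli k))

def wernerStateB : Option (Fin 3 × Bool) → Matrix (Fin 2) (Fin 2) ℂ
  | none => (2⁻¹ : ℂ) • 1
  | some (k, b) => involutionProj (cond b (-pauli k) (pauli k))

lemma Werner_eq_sum_kronecker (f : ℝ) :
    Werner f = ∑ i, (wernerWeight f i : ℂ) • (wernerStateA i ⊗ₖ wernerStateB i) := by
  simp only [Fintype.sum_option, Fintype.sum_prod_type, wernerWeight, wernerStateA, wernerStateB,
    ← Finset.smul_sum, sum_involutionProj_kronecker, Matrix.smul_kronecker, Matrix.kronecker_smul,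
    Matrix.one_kronecker_one, Werner_eq_pauli, Fin.sum_univ_three]
  push_cast
  module

lemma isSeparable2_Werner {f : ℝ} (hf0 : 0 ≤ f) (hf : f ≤ 1 / 3) : IsSeparable2 (Werner f) := by
  rw [Werner_eq_sum_kronecker]
  refine isSeparable2_sum _ _ _ ?_ ?_ ?_ ?_
  · rintro (_ | _) <;> simp only [wernerWeight] <;> linarith
  · simp only [Fintype.sum_option, wernerWeight, Finset.sum_const, Finset.card_univ,
      Fintype.card_prod, Fintype.card_fin, Fintype.card_bool, nsmul_eq_mul]
    push_cast
    ring
  · rintro (_ | ⟨k, _ | _⟩)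
    exacts [isDensity_half_one, isDensity_involutionProj_neg_pauli k,
      isDensity_involutionProj_pauli k]
  · rintro (_ | ⟨k, _ | _⟩)
    exacts [isDensity_half_one, isDensity_involutionProj_pauli k,
      isDensity_involutionProj_neg_pauli k]

/-- if `r_A r_B ≤ 1/3`, the statistics of the maximally entangled state
(`f = 1`) measured with contrasts `r_A, r_B` are reproducible by a separable state measured
with ideal devices; hence device-independent entanglement detection requires
`r_A r_B > 1/3`. -/
theorem separable_reproduction_below_threshold (rA rB : ℝ)
    (hrA : rA ∈ Set.Icc (0:ℝ) 1) (hrB : rB ∈ Set.Icc (0:ℝ) 1) (h : rA * rB ≤ 1 / 3) :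
    ∃ σ : Matrix (Fin 2 × Fin 2) (Fin 2 × Fin 2) ℂ, IsSeparable2 σ ∧ IsDensity σ ∧
      ∀ φ ψ : ℝ, (σ * (Mpovm 1 φ ⊗ₖ Mpovm 1 ψ)).trace
        = (Werner 1 * (Mpovm rA φ ⊗ₖ Mpovm rB ψ)).trace := by
  have hsep := isSeparable2_Werner (mul_nonneg hrA.1 hrB.1) h
  refine ⟨Werner (rA * rB), hsep, hsep.isDensity, fun φ ψ => ?_⟩
  rw [trace_Werner_mul_kronecker_Mpovm 1 rA rB, one_mul]
end
end

section
/- Let β > 0 and θ ∈ (0, π]. Define the Klein–Nishina angular probability density P_{β,θ}(φ) = [2 sin²φ (1 + β(1-cosθ)) + β²(1-cosθ)²] / (π[1 + β(1-cosθ) + β²(1-cosθ)²]), normalized so that ∫₀^π P_{β,θ}(φ)dφ = 1, and the RoC density P_r(φ) = (1 - r cos 2φ)/π. Then P_{β,θ}(φ) = P_r(φ) for all φ ∈ [0,π) if and only if r = 1/(β(1-cosθ) + 1/(1+β(1-cosθ))). Moreover this r lies in (0,1]. -/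
open Matrix Complex
open scoped Matrix Kronecker Real ComplexOrder

noncomputable section

/-- with `k = β(1 - cos θ)`, the normalized Klein--Nishina angular density
`P_{β,θ}(φ) = (2 sin²φ (1+k) + k²)/(π (1 + k + k²))` integrates to 1 over `[0, π)` and
coincides with the RoC density `P_r(φ) = (1 - r cos 2φ)/π` for all `φ ∈ [0, π)` iff
`r = 1/(k + 1/(1+k))`; moreover this value of `r` lies in `(0, 1]`. -/
theorem klein_nishina_matches_roc (β θ : ℝ) (hβ : 0 < β) (hθ : θ ∈ Set.Ioc (0:ℝ) π)
    (r : ℝ) :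
    (∫ φ in (0:ℝ)..π, (2 * Real.sin φ ^ 2 * (1 + β * (1 - Real.cos θ))
        + (β * (1 - Real.cos θ)) ^ 2)
        / (π * (1 + β * (1 - Real.cos θ) + (β * (1 - Real.cos θ)) ^ 2))) = 1 ∧
    ((∀ φ ∈ Set.Ico (0:ℝ) π,
        (2 * Real.sin φ ^ 2 * (1 + β * (1 - Real.cos θ)) + (β * (1 - Real.cos θ)) ^ 2)
          / (π * (1 + β * (1 - Real.cos θ) + (β * (1 - Real.cos θ)) ^ 2))
        = (1 - r * Real.cos (2 * φ)) / π)
      ↔ r = 1 / (β * (1 - Real.cos θ) + 1 / (1 + β * (1 - Real.cos θ)))) ∧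
    1 / (β * (1 - Real.cos θ) + 1 / (1 + β * (1 - Real.cos θ))) ∈ Set.Ioc (0:ℝ) 1 := by
  obtain ⟨hθ0, hθπ⟩ := hθ
  have hcos : Real.cos θ < 1 := by
    have := Real.cos_lt_cos_of_nonneg_of_le_pi (le_refl 0) hθπ hθ0
    simpa using this
  set k := β * (1 - Real.cos θ) with hkdef
  have hk : 0 < k := mul_pos hβ (by linarith)
  have hπ : (0:ℝ) < π := Real.pi_pos
  have hD : 0 < 1 + k + k ^ 2 := by nlinarith
  have h1k : (0:ℝ) < 1 + k := by linarith
  have hr0 : 1 / (k + 1 / (1 + k)) = (1 + k) / (1 + k + k ^ 2) := by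
    rw [div_eq_div_iff (by positivity) (ne_of_gt hD)]
    field_simp
    ring
  refine ⟨?_, ?_, ?_⟩
  · have hfun : (fun φ => (2 * Real.sin φ ^ 2 * (1 + k) + k ^ 2) / (π * (1 + k + k ^ 2)))
        = fun φ => Real.sin φ ^ 2 * (2 * (1 + k) / (π * (1 + k + k ^ 2)))
          + k ^ 2 / (π * (1 + k + k ^ 2)) := by
      funext φ; field_simp
    rw [hfun, intervalIntegral.integral_add (f := fun φ => Real.sin φ ^ 2 * (2 * (1 + k) / (π * (1 + k + k ^ 2)))) (g := fun _ => k ^ 2 / (π * (1 + k + k ^ 2)))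
        (((Real.continuous_sin.pow 2).mul continuous_const).intervalIntegrable _ _)
        intervalIntegrable_const,
      intervalIntegral.integral_mul_const, integral_sin_sq,
      intervalIntegral.integral_const]
    simp only [Real.sin_pi, Real.sin_zero, Real.cos_pi, Real.cos_zero, smul_eq_mul]
    field_simp
    ring
  · constructor
    · intro h
      have h0 := h 0 ⟨le_refl 0, hπ⟩
      simp only [Real.sin_zero, mul_zero, Real.cos_zero, mul_one] at h0
      rw [div_eq_div_iff (by positivity) (ne_of_gt hπ)] at h0
      have h2 : k ^ 2 = (1 - r) * (1 + k + k ^ 2) := by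
        apply mul_left_cancel₀ (ne_of_gt hπ)
        nlinarith [h0]
      rw [hr0, eq_div_iff (ne_of_gt hD)]
      nlinarith [h2]
    · rintro rfl
      intro φ _
      rw [hr0, Real.cos_two_mul]
      have hsc := Real.sin_sq_add_cos_sq φ
      rw [div_eq_div_iff (by positivity) (ne_of_gt hπ)]
      have hcs : Real.cos φ ^ 2 = 1 - Real.sin φ ^ 2 := by linarith
      rw [hcs]
      field_simp
      ring
  · rw [hr0]
    constructor
    · positivity
    · rw [div_le_one hD]; nlinarith
end
end
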